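/- arXiv:math/0610456 — 2 statements merged into one kernel-verified Lean document; each statement's English description precedes it below -/
import Mathlib

section
/- If r_n ≥ k, then r_{(2k+1)n} ≥ k+1. -/
/-- `G(n)` can be represented by assigning to each vertex a set of at most `k`
colors (natural numbers) so that `x_i` and `y_j` share a color iff `i ≤ j`. -/
def HalfRep (n k : ℕ) : Prop :=
  ∃ X Y : Fin n → Finset ℕ,
    (∀ i, (X i).card ≤ k) ∧ (∀ j, (Y j).card ≤ k) ∧
    (∀ i j, (X i ∩ Y j).Nonempty ↔ i ≤ j)

/-- `r n` is the least `k` such that `G(n)` admits such a representation. -/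
noncomputable def r (n : ℕ) : ℕ := sInf {k | HalfRep n k}

/-!
Cut `G((2k+1)n)` into `2k+1` consecutive blocks, each a copy of `G(n)`. Call a block left-covered
when one of its `x`-vertices carries only colours that also occur on `y`-vertices of the same block.
Witnesses in different left-covered blocks have disjoint colour sets (a common colour would join an
`x` to an earlier `y`), and each meets the colour set of the `y`-vertex at the last witness, so at
most `k` blocks are left-covered; dually for right-covered blocks. In a block that is neither, every
vertex has a colour met by no vertex of the other side of the block, and discarding all such
colours represents `G(n)` with at most `k - 1` colours per vertex.
-/

open Finset OrderDual

variable {ι κ α β : Type*}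

def IsHalfRep [Preorder ι] (X Y : ι → Finset β) : Prop :=
  ∀ i j, ¬Disjoint (X i) (Y j) ↔ i ≤ j

namespace IsHalfRep

variable [Preorder ι] {X Y : ι → Finset β}

theorem comp [Preorder α] (h : IsHalfRep X Y) (e : α ↪o ι) : IsHalfRep (X ∘ e) (Y ∘ e) :=
  fun i j => (h (e i) (e j)).trans e.le_iff_le

theorem dual (h : IsHalfRep X Y) : IsHalfRep (ι := ιᵒᵈ) (Y ∘ ofDual) (X ∘ ofDual) :=
  fun i j => disjoint_comm.not.trans (h (ofDual j) (ofDual i))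

theorem nonempty_left (h : IsHalfRep X Y) (i : ι) : (X i).Nonempty :=
  nonempty_of_ne_empty fun hi => (h i i).2 le_rfl (hi ▸ disjoint_empty_left _)

theorem disjoint_left_of_forall_exists_lt (h : IsHalfRep X Y) {p q : ι}
    (hp : ∀ c ∈ X p, ∃ j < q, c ∈ Y j) : Disjoint (X p) (X q) := by
  refine Finset.disjoint_left.2 fun c hcp hcq => ?_
  obtain ⟨j, hjq, hcj⟩ := hp c hcp
  have hqj : q ≤ j := (h q j).1 (Finset.not_disjoint_iff.2 ⟨c, hcq, hcj⟩)
  exact (hjq.trans_le hqj).false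

theorem card_le_card_right (h : IsHalfRep X Y) {T : Finset κ} {p : κ → ι} {b : ι}
    (hpb : ∀ t ∈ T, p t ≤ b) (hdisj : (T : Set κ).PairwiseDisjoint (X ∘ p)) :
    #T ≤ #(Y b) := by
  classical
  calc #T ≤ #(T.biUnion fun t => X (p t) ∩ Y b) :=
        card_le_card_biUnion (hdisj.mono fun t => inter_subset_left)
          fun t ht => not_disjoint_iff_nonempty_inter.1 ((h _ _).2 (hpb t ht))
    _ ≤ #(Y b) := card_le_card (biUnion_subset.2 fun t _ => inter_subset_right)

theorem exists_card_le_pred (h : IsHalfRep X Y) {k : ℕ}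
    (hX : ∀ i, #(X i) ≤ k) (hY : ∀ j, #(Y j) ≤ k)
    (hXpriv : ∀ i, ∃ c ∈ X i, ∀ j, c ∉ Y j) (hYpriv : ∀ j, ∃ c ∈ Y j, ∀ i, c ∉ X i) :
    ∃ X' Y' : ι → Finset β, (∀ i, #(X' i) ≤ k - 1) ∧ (∀ j, #(Y' j) ≤ k - 1) ∧ IsHalfRep X' Y' := by
  classical
  refine ⟨fun i => (X i).filter fun c => ∃ j, c ∈ Y j,
    fun j => (Y j).filter fun c => ∃ i, c ∈ X i, fun i => ?_, fun j => ?_, fun i j => ?_⟩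
  · obtain ⟨c, hci, hc⟩ := hXpriv i
    refine Nat.le_sub_one_of_lt ((card_lt_card (filter_ssubset.2 ⟨c, hci, ?_⟩)).trans_le (hX i))
    exact fun ⟨j, hcj⟩ => hc j hcj
  · obtain ⟨c, hcj, hc⟩ := hYpriv j
    refine Nat.le_sub_one_of_lt ((card_lt_card (filter_ssubset.2 ⟨c, hcj, ?_⟩)).trans_le (hY j))
    exact fun ⟨i, hci⟩ => hc i hci
  · rw [← h i j, not_iff_not]
    simp only [Finset.disjoint_left, mem_filter, not_and, not_exists]
    exact ⟨fun hd c hci hcj => hd ⟨hci, j, hcj⟩ hcj i hci, fun hd c hc hcj _ hcx => hd hc.1 hcj⟩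

end IsHalfRep

section Blocks

variable (X Y : ι → Finset β) (B : κ → α → ι)

def LeftCovered (t : κ) : Prop :=
  ∃ i, ∀ c ∈ X (B t i), ∃ j, c ∈ Y (B t j)

def RightCovered (t : κ) : Prop :=
  ∃ j, ∀ c ∈ Y (B t j), ∃ i, c ∈ X (B t i)

variable {X Y B} [Preorder ι] [LinearOrder κ] {k : ℕ}

theorem card_le_of_forall_leftCovered (h : IsHalfRep X Y)
    (hB : ∀ ⦃s t⦄, s < t → ∀ i j, B s i < B t j) (hY : ∀ j, #(Y j) ≤ k) {T : Finset κ}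
    (hT : ∀ t ∈ T, LeftCovered X Y B t) : #T ≤ k := by
  rcases T.eq_empty_or_nonempty with rfl | hne
  · simp
  have : Nonempty α := ⟨(hT _ (T.max'_mem hne)).choose⟩
  choose! w hw using hT
  have hdisj : ∀ s ∈ T, ∀ t, s < t → Disjoint (X (B s (w s))) (X (B t (w t))) :=
    fun s hs t hst => h.disjoint_left_of_forall_exists_lt fun c hc =>
      let ⟨j, hj⟩ := hw s hs c hc
      ⟨B s j, hB hst _ _, hj⟩
  refine (h.card_le_card_right (p := fun t => B t (w t)) (b := B (T.max' hne) (w (T.max' hne)))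
    (fun t ht => ?_) fun s hs t ht hst => ?_).trans (hY _)
  · rcases (T.le_max' t ht).lt_or_eq with hlt | heq
    · exact (hB hlt _ _).le
    · rw [heq]
  · rcases hst.lt_or_gt with hlt | hgt
    · exact hdisj s hs t hlt
    · exact (hdisj t ht s hgt).symm

/-- `RightCovered` is `LeftCovered` for the reversed orders with `X` and `Y` swapped. -/
theorem card_le_of_forall_rightCovered (h : IsHalfRep X Y)
    (hB : ∀ ⦃s t⦄, s < t → ∀ i j, B s i < B t j) (hX : ∀ i, #(X i) ≤ k) {T : Finset κ}
    (hT : ∀ t ∈ T, RightCovered X Y B t) : #T ≤ k :=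
  card_le_of_forall_leftCovered (κ := κᵒᵈ) (B := fun s i => toDual (B (ofDual s) i)) h.dual
    (fun _ _ hst i j => toDual_lt_toDual.2 (hB (ofDual_lt_ofDual.2 hst) j i)) hX (T := T) hT

theorem exists_not_leftCovered_not_rightCovered [Fintype κ] (h : IsHalfRep X Y)
    (hB : ∀ ⦃s t⦄, s < t → ∀ i j, B s i < B t j) (hX : ∀ i, #(X i) ≤ k) (hY : ∀ j, #(Y j) ≤ k)
    (hκ : 2 * k + 1 ≤ Fintype.card κ) : ∃ t, ¬LeftCovered X Y B t ∧ ¬RightCovered X Y B t := by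
  classical
  by_contra! hall
  have hL := card_le_of_forall_leftCovered h hB hY (T := univ.filter (LeftCovered X Y B))
    fun t ht => (mem_filter.1 ht).2
  have hR := card_le_of_forall_rightCovered h hB hX (T := univ.filter (¬LeftCovered X Y B ·))
    fun t ht => hall t (mem_filter.1 ht).2
  have := card_filter_add_card_filter_not (s := univ) (LeftCovered X Y B)
  rw [card_univ] at this
  omega

end Blocks

theorem IsHalfRep.exists_card_le_pred_of_blocks [Preorder ι] [LinearOrder κ] [Fintype κ]
    [Preorder α] {X Y : ι → Finset β} {k : ℕ} (h : IsHalfRep X Y) (B : κ → α ↪o ι)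
    (hB : ∀ ⦃s t⦄, s < t → ∀ i j, B s i < B t j) (hX : ∀ i, #(X i) ≤ k) (hY : ∀ j, #(Y j) ≤ k)
    (hκ : 2 * k + 1 ≤ Fintype.card κ) :
    ∃ X' Y' : α → Finset β, (∀ i, #(X' i) ≤ k - 1) ∧ (∀ j, #(Y' j) ≤ k - 1) ∧ IsHalfRep X' Y' := by
  obtain ⟨t, hL, hR⟩ :=
    exists_not_leftCovered_not_rightCovered (B := fun t i => B t i) h hB hX hY hκ
  simp only [LeftCovered, RightCovered, not_exists, not_forall, exists_prop] at hL hR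
  exact (h.comp (B t)).exists_card_le_pred (fun _ => hX _) (fun _ => hY _) hL hR

def finBlock (m n : ℕ) (t : Fin m) : Fin n ↪o Fin (m * n) :=
  OrderEmbedding.ofStrictMono (fun i => finProdFinEquiv (t, i)) fun i j hij => by
    simp only [Fin.lt_def, finProdFinEquiv_apply_val] at hij ⊢
    omega

theorem val_finBlock {m n : ℕ} (t : Fin m) (i : Fin n) : (finBlock m n t i : ℕ) = i + n * t :=
  rfl

theorem finBlock_lt_finBlock {m n : ℕ} {s t : Fin m} (hst : s < t) (i j : Fin n) :
    finBlock m n s i < finBlock m n t j := by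
  have hst' : (s : ℕ) + 1 ≤ t := hst
  have := Nat.mul_le_mul_left n hst'
  rw [Fin.lt_def, val_finBlock, val_finBlock]
  linarith [i.isLt]

theorem halfRep_iff {n k : ℕ} : HalfRep n k ↔
    ∃ X Y : Fin n → Finset ℕ, (∀ i, #(X i) ≤ k) ∧ (∀ j, #(Y j) ≤ k) ∧ IsHalfRep X Y := by
  simp only [HalfRep, IsHalfRep, not_disjoint_iff_nonempty_inter]

theorem HalfRep.mono {n k l : ℕ} (h : HalfRep n k) (hkl : k ≤ l) : HalfRep n l :=
  let ⟨X, Y, hX, hY, hXY⟩ := h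
  ⟨X, Y, fun i => (hX i).trans hkl, fun j => (hY j).trans hkl, hXY⟩

theorem halfRep_self (n : ℕ) : HalfRep n n := by
  refine ⟨fun i => Ico (i : ℕ) n, fun j => Iic (j : ℕ), fun i => ?_, fun j => ?_, fun i j => ?_⟩
  · simp
  · simp [Nat.succ_le_of_lt j.isLt]
  · simp only [Fin.le_def, Finset.Nonempty, mem_inter, mem_Ico, mem_Iic]
    exact ⟨fun ⟨c, ⟨hic, _⟩, hcj⟩ => hic.trans hcj, fun hij => ⟨i, ⟨le_rfl, i.isLt⟩, hij⟩⟩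

theorem r_le_of_halfRep {n k : ℕ} (h : HalfRep n k) : r n ≤ k :=
  Nat.sInf_le h

theorem halfRep_of_r_le {n k : ℕ} (h : r n ≤ k) : HalfRep n k :=
  (Nat.sInf_mem (s := {k | HalfRep n k}) ⟨n, halfRep_self n⟩ |>.mono h)

/-- If `r n ≥ k` then `r ((2k+1)n) ≥ k + 1`. -/
theorem r_step (n k : ℕ) (hn : 1 ≤ n) (h : k ≤ r n) :
    k + 1 ≤ r ((2 * k + 1) * n) := by
  by_contra! hlt
  obtain ⟨X, Y, hX, hY, hXY⟩ := halfRep_iff.1 (halfRep_of_r_le (Nat.le_of_lt_succ hlt))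
  have hk : 0 < k := (hXY.nonempty_left ⟨0, by positivity⟩).card_pos.trans_le (hX _)
  obtain ⟨X', Y', hX', hY', hXY'⟩ :=
    hXY.exists_card_le_pred_of_blocks (finBlock _ n) (fun _ _ => finBlock_lt_finBlock) hX hY
      (by simp)
  have := r_le_of_halfRep (halfRep_iff.2 ⟨X', Y', hX', hY', hXY'⟩)
  omega
end

section
/- In any coloring of the vertices of G(N) by sets of colors such that x_p and y_q share a color if and only if p ≤ q, with at most k colors per vertex, every consecutive block G_i of size n contains a vertex that has exactly k colors all of which appear at vertices on the opposite side of G_i, provided r_n = k. -/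
/-!
If no vertex of the block `G_i` is distinguished, then deleting from every vertex of `G_i` the
colors that do not occur on the opposite side of `G_i` removes at least one color from each
vertex, and it does not change which pairs share a color. This represents `G(n)` with at most
`k - 1` colors per vertex, contradicting `r n = k`.
-/

open Finset

theorem Finset.card_le_sub_one_of_subset {γ : Type*} {s t : Finset γ} {k : ℕ} (hts : t ⊆ s)
    (hs : #s ≤ k) (hmiss : #s = k → ∃ c ∈ s, c ∉ t) : #t ≤ k - 1 := by
  by_cases hk : #s = k
  · obtain ⟨c, hcs, hct⟩ := hmiss hk
    have hlt : #t < #s := card_lt_card (ssubset_iff_subset_ne.2 ⟨hts, fun h => hct (h ▸ hcs)⟩)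
    omega
  · have := card_le_card hts
    omega

section SharedColors

variable {α β γ : Type*}

open scoped Classical in
noncomputable def sharedColors (X Y : α → Finset γ) (e : β → α) (j : β) : Finset γ :=
  (X (e j)).filter fun c => ∃ j', c ∈ Y (e j')

open scoped Classical in
theorem mem_sharedColors {X Y : α → Finset γ} {e : β → α} {j : β} {c : γ} :
    c ∈ sharedColors X Y e j ↔ c ∈ X (e j) ∧ ∃ j', c ∈ Y (e j') :=
  mem_filter

theorem sharedColors_subset (X Y : α → Finset γ) (e : β → α) (j : β) :
    sharedColors X Y e j ⊆ X (e j) :=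
  fun _ hc => (mem_sharedColors.1 hc).1

theorem sharedColors_inter [DecidableEq γ] (X Y : α → Finset γ) (e : β → α) (j j' : β) :
    sharedColors X Y e j ∩ sharedColors Y X e j' = X (e j) ∩ Y (e j') := by
  ext c
  simp only [mem_inter, mem_sharedColors]
  exact ⟨fun h => ⟨h.1.1, h.2.1⟩, fun h => ⟨⟨h.1, j', h.2⟩, ⟨h.2, j, h.1⟩⟩⟩

theorem card_sharedColors_le_sub_one {k : ℕ} (X Y : α → Finset γ) (e : β → α) (j : β)
    (hX : #(X (e j)) ≤ k) (hmiss : #(X (e j)) = k → ∃ c ∈ X (e j), ∀ j', c ∉ Y (e j')) :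
    #(sharedColors X Y e j) ≤ k - 1 :=
  card_le_sub_one_of_subset (sharedColors_subset X Y e j) hX fun hk => by
    obtain ⟨c, hc, hout⟩ := hmiss hk
    exact ⟨c, hc, fun hshared => (mem_sharedColors.1 hshared).2.elim hout⟩

end SharedColors

theorem halfRep_sharedColors {α : Type*} [Preorder α] {n k : ℕ} (X Y : α → Finset ℕ)
    (hrep : ∀ p q, (X p ∩ Y q).Nonempty ↔ p ≤ q) (e : Fin n ↪o α)
    (hX : ∀ j, #(sharedColors X Y e j) ≤ k) (hY : ∀ j, #(sharedColors Y X e j) ≤ k) :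
    HalfRep n k :=
  ⟨_, _, hX, hY, fun j j' => by rw [sharedColors_inter, hrep, e.le_iff_le]⟩

theorem not_halfRep_zero {n : ℕ} (hn : 1 ≤ n) : ¬HalfRep n 0 := by
  rintro ⟨X, Y, hX, -, hrep⟩
  obtain ⟨c, hc⟩ := (hrep ⟨0, hn⟩ ⟨0, hn⟩).2 le_rfl
  simp [card_eq_zero.1 (Nat.le_zero.1 (hX _))] at hc

theorem not_halfRep_r_sub_one {n : ℕ} (hn : 1 ≤ n) : ¬HalfRep n (r n - 1) := by
  intro h
  have hr : r n - 1 = 0 := by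
    have : r n ≤ r n - 1 := Nat.sInf_le h
    omega
  exact not_halfRep_zero hn (hr ▸ h)

def blockEmb {n N : ℕ} (i : ℕ) (h : i * n + n ≤ N) : Fin n ↪o Fin N :=
  (Fin.natAddOrderEmb (i * n)).trans (Fin.castLEOrderEmb h)

theorem blockEmb_mem {n N i : ℕ} (h : i * n + n ≤ N) (j : Fin n) :
    i * n ≤ (blockEmb i h j : ℕ) ∧ (blockEmb i h j : ℕ) < (i + 1) * n := by
  have hj := j.2
  simp only [blockEmb, RelEmbedding.trans_apply, Fin.natAddOrderEmb_apply,
    Fin.castLEOrderEmb_apply, Fin.val_castLE, Fin.val_natAdd]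
  constructor <;> nlinarith

/-- If `r n = k`, then in any coloring representing `G(N)`, `N = (2k+1)n`,
with at most `k` colors per vertex, every block `G_i` (indices in
`[i·n, (i+1)·n)`, `0 ≤ i ≤ 2k`) contains a distinguished vertex: a vertex
with exactly `k` colors, all of which appear at vertices on the opposite
side of the block. -/
theorem block_has_distinguished (n k N : ℕ) (hn : 1 ≤ n) (hr : r n = k)
    (hN : N = (2 * k + 1) * n)
    (X Y : Fin N → Finset ℕ)
    (hX : ∀ p, (X p).card ≤ k) (hY : ∀ q, (Y q).card ≤ k)
    (hrep : ∀ p q : Fin N, ((X p) ∩ (Y q)).Nonempty ↔ p ≤ q)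
    (i : ℕ) (hi : i < 2 * k + 1) :
    (∃ p : Fin N, i * n ≤ (p : ℕ) ∧ (p : ℕ) < (i + 1) * n ∧
      (X p).card = k ∧
      ∀ c ∈ X p, ∃ s : Fin N, i * n ≤ (s : ℕ) ∧ (s : ℕ) < (i + 1) * n ∧ c ∈ Y s) ∨
    (∃ q : Fin N, i * n ≤ (q : ℕ) ∧ (q : ℕ) < (i + 1) * n ∧
      (Y q).card = k ∧
      ∀ c ∈ Y q, ∃ s : Fin N, i * n ≤ (s : ℕ) ∧ (s : ℕ) < (i + 1) * n ∧ c ∈ X s) := by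
  have hblock : i * n + n ≤ N := by
    rw [hN]
    nlinarith
  set e := blockEmb i hblock
  by_contra hnone
  push Not at hnone
  obtain ⟨hnoneX, hnoneY⟩ := hnone
  refine hr ▸ not_halfRep_r_sub_one hn <| halfRep_sharedColors X Y hrep e
    (fun j => card_sharedColors_le_sub_one X Y e j (hX _) fun hk => ?_)
    (fun j => card_sharedColors_le_sub_one Y X e j (hY _) fun hk => ?_)
  · obtain ⟨c, hc, hout⟩ := hnoneX (e j) (blockEmb_mem _ j).1 (blockEmb_mem _ j).2 hk
    exact ⟨c, hc, fun j' => hout _ (blockEmb_mem _ j').1 (blockEmb_mem _ j').2⟩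
  · obtain ⟨c, hc, hout⟩ := hnoneY (e j) (blockEmb_mem _ j).1 (blockEmb_mem _ j).2 hk
    exact ⟨c, hc, fun j' => hout _ (blockEmb_mem _ j').1 (blockEmb_mem _ j').2⟩
end
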